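/- Let l ∈ ℚ and define x₂ : (0,1) → ℝ by x₂(z) = z^(1/4)·(1−z)^((2+l)/4)·F(−1/2, 1 + l/2; 1/2; z), with real powers interpreted via rpow. Then x₂ is twice differentiable on (0,1) and satisfies x₂''(z) = r(z)·x₂(z) for all z ∈ (0,1), where r(z) = −3/(16 z²) + (l² − 4)/(16 (1−z)²) − 3(l+2)/(8 z (1−z)). -/

import Mathlib

open Finset

private lemma summable_aux {r : ℝ} (hr0 : 0 ≤ r) (hr : r < 1) (M : ℕ) :
    Summable (fun n : ℕ => ((n : ℝ) + 1) ^ M * r ^ n) := by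
  have h : ∀ n : ℕ, ((n : ℝ) + 1) ^ M * r ^ n
      = ∑ k ∈ Finset.range (M + 1), (M.choose k : ℝ) * ((n : ℝ) ^ k * r ^ n) := by
    intro n
    rw [add_pow, Finset.sum_mul]
    exact Finset.sum_congr rfl fun k _ => by ring
  have hnorm : ‖r‖ < 1 := by rwa [Real.norm_eq_abs, abs_of_nonneg hr0]
  exact Summable.congr (summable_sum fun k _ =>
    (summable_pow_mul_geometric_of_norm_lt_one k hnorm).mul_left _) fun n => (h n).symm

private lemma summable_coeff {e : ℕ → ℝ} {C : ℝ} {M : ℕ}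
    (hb : ∀ n, |e n| ≤ C * ((n : ℝ) + 1) ^ M) {z : ℝ} (hz : |z| < 1) :
    Summable (fun n => e n * z ^ n) := by
  refine Summable.of_norm_bounded (((summable_aux (abs_nonneg z) hz M).mul_left C)) ?_
  intro n
  rw [Real.norm_eq_abs, abs_mul, abs_pow, ← mul_assoc]
  exact mul_le_mul_of_nonneg_right (hb n) (by positivity)

private lemma deriv_bound {e : ℕ → ℝ} {C : ℝ} {M : ℕ}
    (hb : ∀ n, |e n| ≤ C * ((n : ℝ) + 1) ^ M) {ρ : ℝ} (hρ0 : 0 < ρ) (n : ℕ) {y : ℝ}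
    (hy : |y| ≤ ρ) : ‖e n * ((n : ℝ) * y ^ (n - 1))‖ ≤ C * ((n : ℝ) + 1) ^ (M + 1) * ρ ^ n / ρ := by
  have hC : 0 ≤ C := le_trans (abs_nonneg _) (by simpa using hb 0)
  rw [Real.norm_eq_abs, abs_mul, abs_mul, abs_pow, Nat.abs_cast]
  cases n with
  | zero => simp; positivity
  | succ m =>
    have h1 : |y| ^ (m + 1 - 1) ≤ ρ ^ m := by
      simpa using pow_le_pow_left₀ (abs_nonneg y) hy m
    have h2 : C * ((m : ℝ) + 1 + 1) ^ (M + 1) * ρ ^ (m + 1) / ρ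
        = C * ((m : ℝ) + 1 + 1) ^ (M + 1) * ρ ^ m := by
      field_simp; ring
    push_cast
    rw [h2]
    calc |e (m + 1)| * (((m : ℝ) + 1) * |y| ^ (m + 1 - 1))
        ≤ (C * ((m : ℝ) + 1 + 1) ^ M) * (((m : ℝ) + 1) * ρ ^ m) := by
          apply mul_le_mul (by simpa using hb (m + 1)) ?_ (by positivity) (by positivity)
          exact mul_le_mul_of_nonneg_left h1 (by positivity)
      _ ≤ C * ((m : ℝ) + 1 + 1) ^ (M + 1) * ρ ^ m := by
          rw [pow_succ]
          have h4 : ((m : ℝ) + 1) ≤ ((m : ℝ) + 1 + 1) := by linarith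
          have key := mul_le_mul_of_nonneg_left h4
            (show (0:ℝ) ≤ C * ((m : ℝ) + 1 + 1) ^ M * ρ ^ m by positivity)
          ring_nf at key ⊢
          linarith

private lemma hasDerivAt_tsum_pow {e : ℕ → ℝ} {C : ℝ} {M : ℕ}
    (hb : ∀ n, |e n| ≤ C * ((n : ℝ) + 1) ^ M) {z : ℝ} (hz : |z| < 1) :
    HasDerivAt (fun x : ℝ => ∑' n, e n * x ^ n)
      (∑' n, e (n + 1) * ((n : ℝ) + 1) * z ^ n) z := by
  set ρ : ℝ := (|z| + 1) / 2 with hρ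
  have hρ0 : 0 < ρ := by positivity
  have hρ1 : ρ < 1 := by rw [hρ]; linarith
  have hzρ : |z| < ρ := by rw [hρ]; linarith
  have hu : Summable (fun n : ℕ => C * ((n : ℝ) + 1) ^ (M + 1) * ρ ^ n / ρ) := by
    apply Summable.congr (((summable_aux hρ0.le hρ1 (M + 1)).mul_left (C / ρ)))
    intro n; ring
  have hder : HasDerivAt (fun x : ℝ => ∑' n, e n * x ^ n)
      (∑' n, e n * ((n : ℝ) * z ^ (n - 1))) z := by
    refine hasDerivAt_tsum_of_isPreconnected (t := Metric.ball (0:ℝ) ρ) (y₀ := z) hu Metric.isOpen_ball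
      (convex_ball _ _).isPreconnected
      (fun n y _ => (hasDerivAt_pow n y).const_mul (e n))
      (fun n y hy => ?_) ?_ (summable_coeff hb hz) ?_
    · have : |y| ≤ ρ := by
        rw [Metric.mem_ball, Real.dist_eq, sub_zero] at hy; exact hy.le
      exact deriv_bound hb hρ0 n this
    · rw [Metric.mem_ball, Real.dist_eq, sub_zero]; exact hzρ
    · rw [Metric.mem_ball, Real.dist_eq, sub_zero]; exact hzρ
  have hs : Summable (fun n => e n * ((n : ℝ) * z ^ (n - 1))) := by
    refine Summable.of_norm_bounded hu fun n => deriv_bound hb hρ0 n hzρ.le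
  have heq : (∑' n, e n * ((n : ℝ) * z ^ (n - 1)))
      = ∑' n, e (n + 1) * ((n : ℝ) + 1) * z ^ n := by
    rw [Summable.tsum_eq_zero_add hs]
    simp only [Nat.cast_zero, zero_mul, mul_zero, zero_add, Nat.cast_add, Nat.cast_one,
      Nat.add_sub_cancel]
    exact tsum_congr fun n => by ring
  rwa [heq] at hder

/-- The Gauss hypergeometric series
`F(a,b;c;z) = Σ_{n} ((a)_n (b)_n)/((c)_n · n!) · z^n`, where `(x)_n` is the
ascending Pochhammer symbol. -/
noncomputable def hypergeom (a b c z : ℝ) : ℝ :=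
  ∑' n : ℕ, ((ascPochhammer ℝ n).eval a * (ascPochhammer ℝ n).eval b)
    / ((ascPochhammer ℝ n).eval c * (n.factorial : ℝ)) * z ^ n


noncomputable def hgc (la : ℝ) (n : ℕ) : ℝ :=
  ((ascPochhammer ℝ n).eval (-(1/2)) * (ascPochhammer ℝ n).eval (1 + la/2))
    / ((ascPochhammer ℝ n).eval (1/2) * (n.factorial : ℝ))

lemma hypergeom_eq_hgc (la z : ℝ) :
    hypergeom (-(1/2)) (1 + la/2) (1/2) z = ∑' n, hgc la n * z ^ n := rfl

lemma hgc_zero (la : ℝ) : hgc la 0 = 1 := by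
  simp [hgc]

lemma hgc_rec (la : ℝ) (n : ℕ) :
    hgc la (n + 1) * (((n : ℝ) + 1) * ((n : ℝ) + 1/2))
      = hgc la n * (((n : ℝ) - 1/2) * ((n : ℝ) + 1 + la/2)) := by
  have hden : (0:ℝ) < (ascPochhammer ℝ n).eval (1/2) :=
    ascPochhammer_pos n _ (by norm_num)
  have hfac : ((n.factorial : ℝ)) ≠ 0 := Nat.cast_ne_zero.2 n.factorial_ne_zero
  unfold hgc
  rw [ascPochhammer_succ_right]
  simp only [Polynomial.eval_mul, Polynomial.eval_add, Polynomial.eval_X,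
    Polynomial.eval_natCast, Nat.factorial_succ, Nat.cast_mul, Nat.cast_add, Nat.cast_one]
  field_simp
  ring

lemma hgc_bound (la : ℝ) : ∃ M : ℕ, ∀ n : ℕ, |hgc la n| ≤ ((n : ℝ) + 1) ^ M := by
  set B : ℝ := |1 + la/2| with hB
  refine ⟨⌈2 * B⌉₊ + 1, ?_⟩
  have hM : 2 * B + 1 ≤ ((⌈2 * B⌉₊ + 1 : ℕ) : ℝ) := by
    push_cast
    have := Nat.le_ceil (2 * B)
    linarith
  set M : ℕ := ⌈2 * B⌉₊ + 1
  intro n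
  induction n with
  | zero => simp [hgc_zero]
  | succ n ih =>
    have hn1 : (0:ℝ) < (n : ℝ) + 1 := by positivity
    have hn2 : (0:ℝ) < (n : ℝ) + 1/2 := by positivity
    have hd : ((n : ℝ) + 1) * ((n : ℝ) + 1/2) ≠ 0 := by positivity
    have hrec : hgc la (n + 1)
        = hgc la n * (((n : ℝ) - 1/2) * ((n : ℝ) + 1 + la/2))
          / (((n : ℝ) + 1) * ((n : ℝ) + 1/2)) := by
      rw [eq_div_iff hd]; exact hgc_rec la n
    have hB0 : 0 ≤ B := abs_nonneg _
    have habs1 : |(n : ℝ) - 1/2| ≤ (n : ℝ) + 1 := by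
      rw [abs_le]
      constructor <;> linarith [Nat.cast_nonneg (α := ℝ) n]
    have habs2 : |(n : ℝ) + 1 + la/2| ≤ (n : ℝ) + 1 + B := by
      calc |(n : ℝ) + 1 + la/2| = |(n : ℝ) + (1 + la/2)| := by ring_nf
        _ ≤ |(n : ℝ)| + |1 + la/2| := abs_add_le _ _
        _ = (n : ℝ) + B := by rw [Nat.abs_cast, hB]
        _ ≤ (n : ℝ) + 1 + B := by linarith
    have step1 : |hgc la (n + 1)| ≤ ((n : ℝ) + 1) ^ M
        * (((n : ℝ) + 1) * ((n : ℝ) + 1 + B)) / (((n : ℝ) + 1) * ((n : ℝ) + 1/2)) := by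
      rw [hrec, abs_div, abs_mul, abs_mul]
      rw [abs_of_pos (show (0:ℝ) < ((n : ℝ) + 1) * ((n : ℝ) + 1/2) by positivity)]
      gcongr
    have heq : ((n : ℝ) + 1) ^ M * (((n : ℝ) + 1) * ((n : ℝ) + 1 + B))
        / (((n : ℝ) + 1) * ((n : ℝ) + 1/2))
        = ((n : ℝ) + 1) ^ M * (((n : ℝ) + 1 + B) / ((n : ℝ) + 1/2)) := by
      field_simp
    have hfrac : ((n : ℝ) + 1 + B) / ((n : ℝ) + 1/2) ≤ 1 + (M : ℝ) / ((n : ℝ) + 1) := by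
      rw [div_le_iff₀ hn2]
      have h1 : (1 + (M : ℝ) / ((n : ℝ) + 1)) * ((n : ℝ) + 1/2)
          = ((n : ℝ) + 1/2) + (M : ℝ) * (((n : ℝ) + 1/2) / ((n : ℝ) + 1)) := by ring
      have h2 : ((n : ℝ) + 1 + (M : ℝ)) * ((n : ℝ) + 1/2) / ((n : ℝ) + 1)
          = (1 + (M : ℝ) / ((n : ℝ) + 1)) * ((n : ℝ) + 1/2) := by field_simp
      rw [← h2, le_div_iff₀ hn1]
      nlinarith [Nat.cast_nonneg (α := ℝ) n]
    have bern : 1 + (M : ℝ) / ((n : ℝ) + 1) ≤ (1 + 1 / ((n : ℝ) + 1)) ^ M := by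
      have h := one_add_mul_le_pow (a := 1 / ((n : ℝ) + 1))
        (by linarith [one_div_nonneg.2 hn1.le] : (-2:ℝ) ≤ 1 / ((n : ℝ) + 1)) M
      rwa [mul_one_div] at h
    have key : ((n : ℝ) + 1) ^ M * (1 + (M : ℝ) / ((n : ℝ) + 1)) ≤ ((n : ℝ) + 2) ^ M := by
      calc ((n : ℝ) + 1) ^ M * (1 + (M : ℝ) / ((n : ℝ) + 1))
          ≤ ((n : ℝ) + 1) ^ M * (1 + 1 / ((n : ℝ) + 1)) ^ M :=
            mul_le_mul_of_nonneg_left bern (by positivity)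
        _ = (((n : ℝ) + 1) * (1 + 1 / ((n : ℝ) + 1))) ^ M := (mul_pow _ _ _).symm
        _ = ((n : ℝ) + 2) ^ M := by
            congr 1
            field_simp
            ring
    calc |hgc la (n + 1)| ≤ ((n : ℝ) + 1) ^ M * (((n : ℝ) + 1 + B) / ((n : ℝ) + 1/2)) := by
          rw [← heq]; exact step1
      _ ≤ ((n : ℝ) + 1) ^ M * (1 + (M : ℝ) / ((n : ℝ) + 1)) := by
          have := mul_le_mul_of_nonneg_left hfrac
            (show (0:ℝ) ≤ ((n : ℝ) + 1) ^ M by positivity)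
          linarith
      _ ≤ ((n : ℝ) + 2) ^ M := key
      _ = (((n + 1 : ℕ) : ℝ) + 1) ^ M := by push_cast; ring

noncomputable def hgF (la : ℝ) : ℝ → ℝ := fun z => ∑' n, hgc la n * z ^ n

noncomputable def hgF1 (la : ℝ) : ℝ → ℝ :=
  fun z => ∑' n, hgc la (n + 1) * ((n : ℝ) + 1) * z ^ n

noncomputable def hgF2 (la : ℝ) : ℝ → ℝ :=
  fun z => ∑' n, hgc la (n + 2) * ((n : ℝ) + 2) * ((n : ℝ) + 1) * z ^ n

lemma hgc_bound1 (la : ℝ) :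
    ∃ (C : ℝ) (M : ℕ), ∀ n : ℕ, |hgc la (n + 1) * ((n : ℝ) + 1)| ≤ C * ((n : ℝ) + 1) ^ M := by
  obtain ⟨M, hM⟩ := hgc_bound la
  refine ⟨2 ^ (M + 1), M + 1, fun n => ?_⟩
  rw [abs_mul, abs_of_pos (show (0:ℝ) < (n : ℝ) + 1 by positivity)]
  calc |hgc la (n + 1)| * ((n : ℝ) + 1)
      ≤ (((n + 1 : ℕ) : ℝ) + 1) ^ M * ((n : ℝ) + 1) :=
        mul_le_mul_of_nonneg_right (hM (n + 1)) (by positivity)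
    _ ≤ (2 * ((n : ℝ) + 1)) ^ M * (2 * ((n : ℝ) + 1)) := by
        push_cast
        gcongr
        · linarith [Nat.cast_nonneg (α := ℝ) n]
        · linarith [Nat.cast_nonneg (α := ℝ) n]
    _ = 2 ^ (M + 1) * ((n : ℝ) + 1) ^ (M + 1) := by
        rw [mul_pow, pow_succ, pow_succ]; ring
  
lemma hgc_bound2 (la : ℝ) :
    ∃ (C : ℝ) (M : ℕ), ∀ n : ℕ,
      |hgc la (n + 2) * ((n : ℝ) + 2) * ((n : ℝ) + 1)| ≤ C * ((n : ℝ) + 1) ^ M := by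
  obtain ⟨M, hM⟩ := hgc_bound la
  refine ⟨3 ^ (M + 2), M + 2, fun n => ?_⟩
  rw [abs_mul, abs_mul, abs_of_pos (show (0:ℝ) < (n : ℝ) + 1 by positivity),
    abs_of_pos (show (0:ℝ) < (n : ℝ) + 2 by positivity)]
  calc |hgc la (n + 2)| * ((n : ℝ) + 2) * ((n : ℝ) + 1)
      ≤ (((n + 2 : ℕ) : ℝ) + 1) ^ M * ((n : ℝ) + 2) * ((n : ℝ) + 1) := by
        have := hM (n + 2)
        gcongr
    _ ≤ (3 * ((n : ℝ) + 1)) ^ M * (3 * ((n : ℝ) + 1)) * (3 * ((n : ℝ) + 1)) := by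
        push_cast
        gcongr <;> linarith [Nat.cast_nonneg (α := ℝ) n]
    _ = 3 ^ (M + 2) * ((n : ℝ) + 1) ^ (M + 2) := by
        rw [mul_pow, pow_succ, pow_succ, pow_succ, pow_succ]; ring

lemma hgF_summable (la : ℝ) {z : ℝ} (hz : |z| < 1) :
    Summable (fun n => hgc la n * z ^ n) := by
  obtain ⟨M, hM⟩ := hgc_bound la
  exact summable_coeff (C := 1) (M := M) (fun n => by simpa using hM n) hz

lemma hgF1_summable (la : ℝ) {z : ℝ} (hz : |z| < 1) :
    Summable (fun n => hgc la (n + 1) * ((n : ℝ) + 1) * z ^ n) := by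
  obtain ⟨C, M, hM⟩ := hgc_bound1 la
  exact summable_coeff hM hz

lemma hgF2_summable (la : ℝ) {z : ℝ} (hz : |z| < 1) :
    Summable (fun n => hgc la (n + 2) * ((n : ℝ) + 2) * ((n : ℝ) + 1) * z ^ n) := by
  obtain ⟨C, M, hM⟩ := hgc_bound2 la
  exact summable_coeff hM hz

lemma hgF_hasDerivAt (la : ℝ) {z : ℝ} (hz : |z| < 1) :
    HasDerivAt (hgF la) (hgF1 la z) z := by
  obtain ⟨M, hM⟩ := hgc_bound la
  exact hasDerivAt_tsum_pow (C := 1) (M := M) (fun n => by simpa using hM n) hz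

lemma hgF1_hasDerivAt (la : ℝ) {z : ℝ} (hz : |z| < 1) :
    HasDerivAt (hgF1 la) (hgF2 la z) z := by
  obtain ⟨C, M, hM⟩ := hgc_bound1 la
  have h := hasDerivAt_tsum_pow (e := fun n => hgc la (n + 1) * ((n : ℝ) + 1)) hM hz
  have heq : (∑' n, hgc la (n + 1 + 1) * (((n + 1 : ℕ) : ℝ) + 1) * ((n : ℝ) + 1) * z ^ n)
      = hgF2 la z := by
    unfold hgF2
    exact tsum_congr fun n => by push_cast; ring
  rw [heq] at h
  exact h

lemma hg_ODE (la : ℝ) {z : ℝ} (hz : |z| < 1) :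
    z * (1 - z) * hgF2 la z
      = ((3/2 + la/2) * z - 1/2) * hgF1 la z - (1/2) * (1 + la/2) * hgF la z := by
  have hF : HasSum (fun n => hgc la n * z ^ n) (hgF la z) := (hgF_summable la hz).hasSum
  have hF1 : HasSum (fun n => hgc la (n + 1) * ((n : ℝ) + 1) * z ^ n) (hgF1 la z) :=
    (hgF1_summable la hz).hasSum
  have hF2 : HasSum (fun n => hgc la (n + 2) * ((n : ℝ) + 2) * ((n : ℝ) + 1) * z ^ n)
      (hgF2 la z) := (hgF2_summable la hz).hasSum
  -- shift of F₂ by one: coefficient e1 n = hgc (n+1) (n+1) n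
  have h1 : HasSum (fun n => hgc la (n + 1) * ((n : ℝ) + 1) * (n : ℝ) * z ^ n)
      (z * hgF2 la z) := by
    have t := hF2.mul_left z
    have hshift : (fun n => hgc la (n + 1 + 1) * (((n + 1 : ℕ) : ℝ) + 1) * ((n + 1 : ℕ) : ℝ)
        * z ^ (n + 1)) = fun n =>
        z * (hgc la (n + 2) * ((n : ℝ) + 2) * ((n : ℝ) + 1) * z ^ n) := by
      funext n; push_cast; ring
    have t2 : HasSum (fun n => hgc la (n + 1 + 1) * (((n + 1 : ℕ) : ℝ) + 1) * ((n + 1 : ℕ) : ℝ)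
        * z ^ (n + 1)) (z * hgF2 la z) := by rw [hshift]; exact t
    have t3 := (hasSum_nat_add_iff (f := fun n => hgc la (n + 1) * ((n : ℝ) + 1) * (n : ℝ)
        * z ^ n) 1).mp t2
    simpa using t3
  -- shift of F₂ by two: coefficient e2 n = hgc n * n * (n - 1)
  have h2 : HasSum (fun n => hgc la n * (n : ℝ) * ((n : ℝ) - 1) * z ^ n)
      (z ^ 2 * hgF2 la z) := by
    have t := hF2.mul_left (z ^ 2)
    have hshift : (fun n => hgc la (n + 2) * ((n + 2 : ℕ) : ℝ) * (((n + 2 : ℕ) : ℝ) - 1)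
        * z ^ (n + 2)) = fun n =>
        z ^ 2 * (hgc la (n + 2) * ((n : ℝ) + 2) * ((n : ℝ) + 1) * z ^ n) := by
      funext n; push_cast; ring
    have t2 : HasSum (fun n => hgc la (n + 2) * ((n + 2 : ℕ) : ℝ) * (((n + 2 : ℕ) : ℝ) - 1)
        * z ^ (n + 2)) (z ^ 2 * hgF2 la z) := by rw [hshift]; exact t
    have t3 := (hasSum_nat_add_iff (f := fun n => hgc la n * (n : ℝ) * ((n : ℝ) - 1) * z ^ n)
        2).mp t2
    simpa [Finset.sum_range_succ] using t3
  -- shift of F₁ by one: coefficient hgc n * n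
  have h3 : HasSum (fun n => hgc la n * (n : ℝ) * z ^ n) (z * hgF1 la z) := by
    have t := hF1.mul_left z
    have hshift : (fun n => hgc la (n + 1) * ((n + 1 : ℕ) : ℝ) * z ^ (n + 1)) = fun n =>
        z * (hgc la (n + 1) * ((n : ℝ) + 1) * z ^ n) := by
      funext n; push_cast; ring
    have t2 : HasSum (fun n => hgc la (n + 1) * ((n + 1 : ℕ) : ℝ) * z ^ (n + 1))
        (z * hgF1 la z) := by rw [hshift]; exact t
    have t3 := (hasSum_nat_add_iff (f := fun n => hgc la n * (n : ℝ) * z ^ n) 1).mp t2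
    simpa using t3
  have comb := (((h1.sub h2).add (hF1.mul_left (1/2))).sub
      (h3.mul_left (3/2 + la/2))).add (hF.mul_left ((1/2) * (1 + la/2)))
  have hzero : (fun n => hgc la (n + 1) * ((n : ℝ) + 1) * (n : ℝ) * z ^ n
        - hgc la n * (n : ℝ) * ((n : ℝ) - 1) * z ^ n
        + 1/2 * (hgc la (n + 1) * ((n : ℝ) + 1) * z ^ n)
        - (3/2 + la/2) * (hgc la n * (n : ℝ) * z ^ n)
        + 1/2 * (1 + la/2) * (hgc la n * z ^ n)) = fun _ => (0 : ℝ) := by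
    funext n
    have hr := hgc_rec la n
    linear_combination z ^ n * hr
  rw [hzero] at comb
  have : z * hgF2 la z - z ^ 2 * hgF2 la z + 1/2 * hgF1 la z - (3/2 + la/2) * (z * hgF1 la z)
      + 1/2 * (1 + la/2) * hgF la z = 0 := comb.unique hasSum_zero
  linear_combination this

/-- The second solution `x₂(z) = z^{1/4}(1−z)^{(2+l)/4} F(−1/2, 1+l/2; 1/2; z)`
(equation (eq:X_sol_2F) of the paper) of the reduced variational equation
`X'' = r(z)X` with
`r(z) = −3/(16z²) + (l²−4)/(16(1−z)²) − 3(l+2)/(8z(1−z))`: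
`x₂` is twice differentiable on `(0,1)` and satisfies the equation there. -/
theorem x2_solves_reduced_equation (l : ℚ) :
    ∃ x₂' : ℝ → ℝ,
      (∀ z ∈ Set.Ioo (0 : ℝ) 1,
        HasDerivAt (fun z : ℝ => z ^ ((1 : ℝ)/4) * (1 - z) ^ ((2 + (l : ℝ))/4)
            * hypergeom (-(1/2)) (1 + (l : ℝ)/2) (1/2) z)
          (x₂' z) z) ∧
      (∀ z ∈ Set.Ioo (0 : ℝ) 1,
        HasDerivAt x₂'
          ((-3 / (16 * z ^ 2) + ((l : ℝ) ^ 2 - 4) / (16 * (1 - z) ^ 2)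
              - 3 * ((l : ℝ) + 2) / (8 * z * (1 - z)))
            * (z ^ ((1 : ℝ)/4) * (1 - z) ^ ((2 + (l : ℝ))/4)
              * hypergeom (-(1/2)) (1 + (l : ℝ)/2) (1/2) z)) z) := by
  set la : ℝ := (l : ℝ) with hla
  have hyp_eq : hypergeom (-(1/2)) (1 + la/2) (1/2) = hgF la := rfl
  refine ⟨fun z => (1/4 * z ^ ((1:ℝ)/4 - 1) * (1 - z) ^ ((2 + la)/4)
      - (2 + la)/4 * z ^ ((1:ℝ)/4) * (1 - z) ^ ((2 + la)/4 - 1)) * hgF la z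
      + z ^ ((1:ℝ)/4) * (1 - z) ^ ((2 + la)/4) * hgF1 la z, ?_, ?_⟩
  · intro z hz
    obtain ⟨hz0, hz1⟩ := hz
    have habs : |z| < 1 := abs_lt.2 ⟨by linarith, hz1⟩
    have h1z : (0:ℝ) < 1 - z := by linarith
    have hA : HasDerivAt (fun z : ℝ => z ^ ((1:ℝ)/4)) (1/4 * z ^ ((1:ℝ)/4 - 1)) z := by
      simpa using Real.hasDerivAt_rpow_const (p := (1:ℝ)/4) (Or.inl hz0.ne')
    have hB : HasDerivAt (fun z : ℝ => (1 - z) ^ ((2 + la)/4))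
        ((-1) * ((2 + la)/4) * (1 - z) ^ ((2 + la)/4 - 1)) z :=
      ((hasDerivAt_id z).const_sub 1).rpow_const (Or.inl h1z.ne')
    have hF := hgF_hasDerivAt la habs
    have hprod := (hA.mul hB).mul hF
    rw [hyp_eq]
    refine hprod.congr_deriv ?_
    simp only [Pi.mul_apply]
    ring
  · intro z hz
    obtain ⟨hz0, hz1⟩ := hz
    have habs : |z| < 1 := abs_lt.2 ⟨by linarith, hz1⟩
    have h1z : (0:ℝ) < 1 - z := by linarith
    have hA : HasDerivAt (fun z : ℝ => z ^ ((1:ℝ)/4)) ((1:ℝ)/4 * z ^ ((1:ℝ)/4 - 1)) z := by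
      simpa using Real.hasDerivAt_rpow_const (p := (1:ℝ)/4) (Or.inl hz0.ne')
    have hA1 : HasDerivAt (fun z : ℝ => z ^ ((1:ℝ)/4 - 1))
        (((1:ℝ)/4 - 1) * z ^ ((1:ℝ)/4 - 1 - 1)) z :=
      Real.hasDerivAt_rpow_const (Or.inl hz0.ne')
    have hB : HasDerivAt (fun z : ℝ => (1 - z) ^ ((2 + la)/4))
        ((-1) * ((2 + la)/4) * (1 - z) ^ ((2 + la)/4 - 1)) z :=
      ((hasDerivAt_id z).const_sub 1).rpow_const (Or.inl h1z.ne')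
    have hB1 : HasDerivAt (fun z : ℝ => (1 - z) ^ ((2 + la)/4 - 1))
        ((-1) * ((2 + la)/4 - 1) * (1 - z) ^ ((2 + la)/4 - 1 - 1)) z :=
      ((hasDerivAt_id z).const_sub 1).rpow_const (Or.inl h1z.ne')
    have hF := hgF_hasDerivAt la habs
    have hF1d := hgF1_hasDerivAt la habs
    have hD := ((((hA1.const_mul (1/4 : ℝ)).mul hB).sub
        ((hA.const_mul ((2 + la)/4)).mul hB1)).mul hF).add ((hA.mul hB).mul hF1d)
    have hne : z * (1 - z) ≠ 0 := by positivity
    have hF2eq : hgF2 la z = (((3/2 + la/2) * z - 1/2) * hgF1 la z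
        - (1/2) * (1 + la/2) * hgF la z) / (z * (1 - z)) := by
      rw [eq_div_iff hne]
      linear_combination hg_ODE la habs
    have e1 : z ^ ((1:ℝ)/4 - 1) = z ^ ((1:ℝ)/4) / z := by
      rw [Real.rpow_sub hz0, Real.rpow_one]
    have e2 : z ^ ((1:ℝ)/4 - 1 - 1) = z ^ ((1:ℝ)/4) / z / z := by
      rw [Real.rpow_sub hz0, Real.rpow_sub hz0, Real.rpow_one]
    have f1 : (1 - z) ^ ((2 + la)/4 - 1) = (1 - z) ^ ((2 + la)/4) / (1 - z) := by
      rw [Real.rpow_sub h1z, Real.rpow_one]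
    have f2 : (1 - z) ^ ((2 + la)/4 - 1 - 1) = (1 - z) ^ ((2 + la)/4) / (1 - z) / (1 - z) := by
      rw [Real.rpow_sub h1z, Real.rpow_sub h1z, Real.rpow_one]
    rw [hyp_eq]
    refine hD.congr_deriv ?_
    simp only [Pi.mul_apply, Pi.sub_apply]
    rw [e1, e2, f1, f2, hF2eq]
    field_simp
    ring
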